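/- arXiv:2205.07488 — 6 statements merged into one kernel-verified Lean document; each statement's English description precedes it below -/
import Mathlib

section
/- Fix d ≥ 1, ε ∈ (0, 1/3], and set p := (1−ε)/ε. For θ ∈ ℝ^d define the density q_θ(x) := (1−ε)·φ_{θ,I}(x) + ε·φ_{−pθ,I}(x) on ℝ^d. Then for all θ, θ' ∈ ℝ^d: | ∫_{ℝ^d} q_θ(x) q_{θ'}(x) / φ_{0,I}(x) dx − 1 | ≤ exp(⟨θ,θ'⟩² / ε⁴) − 1. -/
/-!
Dividing by `φ_{0,I}` completes the square: `φ_a φ_b / φ_0 = exp ⟨a, b⟩ · φ_{a+b}`, so the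
χ²-correlation of two two-component mixtures is a weighted sum of four exponentials
`exp (c ⟨θ, θ'⟩)` with `c ∈ {1, -p, -p, p²}` and weights `(1-ε)², (1-ε)ε, ε(1-ε), ε²`. The
contamination point `-pθ` makes the weighted mean of `c` vanish, and all `|c| ≤ ε⁻²`, so
`1 + x ≤ eˣ ≤ x + exp (x²)` bounds the sum between `1` and `exp (⟨θ, θ'⟩² / ε⁴)`.
-/

open MeasureTheory Real

/-- The Gaussian density `φ_{μ,I}` on `ℝ^d` with identity covariance:
`φ_{μ,I}(x) = (2π)^{−d/2} exp(−(1/2)‖x−μ‖₂²)`. -/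
noncomputable def gaussI {d : ℕ} (μ : Fin d → ℝ) (x : Fin d → ℝ) : ℝ :=
  (2 * π) ^ (-(d : ℝ) / 2) * Real.exp (-(1 / 2) * ∑ i, (x i - μ i) ^ 2)

open ProbabilityTheory Matrix

lemma exp_le_add_exp_sq (x : ℝ) : exp x ≤ x + exp (x ^ 2) := by
  have hsq : x ^ 2 + 1 ≤ exp (x ^ 2) := add_one_le_exp _
  rcases le_or_gt |x| 1 with hx | hx
  · linarith [(abs_le.1 (abs_exp_sub_one_sub_id_le hx)).2]
  rcases lt_abs.1 hx with hx | hx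
  · linarith [exp_le_exp.2 (show x ≤ x ^ 2 by nlinarith)]
  · nlinarith [exp_le_one_iff.2 (show x ≤ 0 by linarith)]

lemma abs_sum_mul_exp_mul_sub_one_le {ι : Type*} (s : Finset ι) (w a : ι → ℝ) {M : ℝ}
    (hw : ∀ i ∈ s, 0 ≤ w i) (hw_sum : ∑ i ∈ s, w i = 1) (hmean : ∑ i ∈ s, w i * a i = 0)
    (ha : ∀ i ∈ s, |a i| ≤ M) (t : ℝ) :
    |∑ i ∈ s, w i * exp (a i * t) - 1| ≤ exp ((M * t) ^ 2) - 1 := by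
  have hsum (c : ℝ) : ∑ i ∈ s, w i * (a i * t + c) = c := by
    simp only [mul_add, Finset.sum_add_distrib, ← mul_assoc, ← Finset.sum_mul, hmean, hw_sum]
    ring
  have lower : 1 ≤ ∑ i ∈ s, w i * exp (a i * t) := calc
    1 = ∑ i ∈ s, w i * (a i * t + 1) := (hsum 1).symm
    _ ≤ _ := Finset.sum_le_sum fun i hi ↦
      mul_le_mul_of_nonneg_left (add_one_le_exp _) (hw i hi)
  have upper : ∑ i ∈ s, w i * exp (a i * t) ≤ exp ((M * t) ^ 2) := calc
    _ ≤ ∑ i ∈ s, w i * (a i * t + exp ((M * t) ^ 2)) := by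
      refine Finset.sum_le_sum fun i hi ↦ mul_le_mul_of_nonneg_left ?_ (hw i hi)
      have : (a i * t) ^ 2 ≤ (M * t) ^ 2 := by
        rw [mul_pow, mul_pow, ← sq_abs (a i)]
        gcongr
        exact ha i hi
      linarith [exp_le_add_exp_sq (a i * t), exp_le_exp.2 this]
    _ = _ := hsum _
  rw [abs_of_nonneg (by linarith)]
  linarith

section GaussianDensity

variable {d : ℕ}

lemma gaussI_eq_prod_gaussianPDFReal (μ x : Fin d → ℝ) :
    gaussI μ x = ∏ i, gaussianPDFReal (μ i) 1 (x i) := by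
  simp only [gaussI, gaussianPDFReal, Finset.prod_mul_distrib, Finset.prod_const,
    Finset.card_univ, Fintype.card_fin, ← exp_sum, NNReal.coe_one, mul_one, Finset.mul_sum]
  congr 1
  · rw [sqrt_eq_rpow, ← rpow_neg (by positivity), ← rpow_natCast, ← rpow_mul (by positivity)]
    ring_nf
  · simp only [neg_div, neg_mul, one_div, inv_mul_eq_div]

lemma integrable_gaussI (μ : Fin d → ℝ) : Integrable (gaussI μ) := by
  simp_rw [funext (gaussI_eq_prod_gaussianPDFReal μ)]
  exact Integrable.fintype_prod fun i ↦ integrable_gaussianPDFReal (μ i) 1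

lemma integral_gaussI (μ : Fin d → ℝ) : ∫ x, gaussI μ x = 1 := by
  simp_rw [gaussI_eq_prod_gaussianPDFReal μ]
  rw [integral_fintype_prod_volume_eq_prod (f := fun i ↦ gaussianPDFReal (μ i) 1)]
  simp [integral_gaussianPDFReal_eq_one]

lemma gaussI_mul_gaussI_div_gaussI_zero (a b x : Fin d → ℝ) :
    gaussI a x * gaussI b x / gaussI 0 x = exp (a ⬝ᵥ b) * gaussI (a + b) x := by
  have hexp : (-(1 / 2) * ∑ i, (x i - a i) ^ 2) + (-(1 / 2) * ∑ i, (x i - b i) ^ 2)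
      = a ⬝ᵥ b + (-(1 / 2) * ∑ i, (x i - (a + b) i) ^ 2)
        + (-(1 / 2) * ∑ i, (x i - (0 : Fin d → ℝ) i) ^ 2) := by
    simp only [dotProduct, Finset.mul_sum, ← Finset.sum_add_distrib]
    exact Finset.sum_congr rfl fun i _ ↦ by simp only [Pi.add_apply, Pi.zero_apply]; ring
  rw [div_eq_iff (by unfold gaussI; positivity)]
  unfold gaussI
  rw [mul_mul_mul_comm, ← exp_add, hexp, exp_add, exp_add]
  ring

lemma integral_mixture_mul_mixture_div_gaussI_zero (α β α' β' : ℝ) (a b a' b' : Fin d → ℝ) :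
    ∫ x, (α * gaussI a x + β * gaussI b x) * (α' * gaussI a' x + β' * gaussI b' x)
        / gaussI 0 x
      = α * α' * exp (a ⬝ᵥ a') + α * β' * exp (a ⬝ᵥ b')
        + β * α' * exp (b ⬝ᵥ a') + β * β' * exp (b ⬝ᵥ b') := by
  have hexpand (x : Fin d → ℝ) :
      (α * gaussI a x + β * gaussI b x) * (α' * gaussI a' x + β' * gaussI b' x) / gaussI 0 x
        = α * α' * exp (a ⬝ᵥ a') * gaussI (a + a') x + α * β' * exp (a ⬝ᵥ b') * gaussI (a + b') x
          + β * α' * exp (b ⬝ᵥ a') * gaussI (b + a') x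
          + β * β' * exp (b ⬝ᵥ b') * gaussI (b + b') x := by
    simp only [mul_assoc, ← gaussI_mul_gaussI_div_gaussI_zero]
    ring
  simp only [hexpand]
  rw [integral_add, integral_add, integral_add] <;>
    simp [integral_const_mul, integral_gaussI, (integrable_gaussI _).const_mul]

end GaussianDensity

lemma abs_contaminated_sum_exp_sub_one_le {ε p : ℝ} (hε₀ : 0 < ε) (hε₁ : ε ≤ 1)
    (hp : p = (1 - ε) / ε) (t : ℝ) :
    |(1 - ε) ^ 2 * exp t + (1 - ε) * ε * exp (-p * t) + ε * (1 - ε) * exp (-p * t)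
        + ε ^ 2 * exp (p ^ 2 * t) - 1| ≤ exp (t ^ 2 / ε ^ 4) - 1 := by
  have hu : 1 ≤ ε⁻¹ := one_le_inv_iff₀.2 ⟨hε₀, hε₁⟩
  have hp' : p = ε⁻¹ - 1 := by rw [hp]; field_simp
  have hεp : ε * p = 1 - ε := by rw [hp']; field_simp
  have habs_one : |1| ≤ ε⁻¹ ^ 2 := by rw [abs_one]; nlinarith
  have habs_p : |p| ≤ ε⁻¹ := abs_le.2 ⟨by linarith, by linarith⟩
  have habs_neg_p : |-p| ≤ ε⁻¹ ^ 2 := by rw [abs_neg]; nlinarith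
  have habs_p_sq : |p ^ 2| ≤ ε⁻¹ ^ 2 := by rw [abs_pow]; gcongr
  have key := abs_sum_mul_exp_mul_sub_one_le Finset.univ
    ![(1 - ε) ^ 2, (1 - ε) * ε, ε * (1 - ε), ε ^ 2] ![1, -p, -p, p ^ 2] (M := ε⁻¹ ^ 2)
    (by intro i _; fin_cases i <;> simp <;> nlinarith)
    (by simp [Fin.sum_univ_four]; ring)
    (by simp [Fin.sum_univ_four]; linear_combination (ε * p - (1 - ε)) * hεp)
    (by intro i _; fin_cases i; exacts [habs_one, habs_neg_p, habs_neg_p, habs_p_sq])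
    t
  rw [show t ^ 2 / ε ^ 4 = (ε⁻¹ ^ 2 * t) ^ 2 by field_simp]
  simpa [Fin.sum_univ_four] using key

theorem stmt2_general {d : ℕ} (ε : ℝ) (hε : ε ∈ Set.Ioc 0 (1 / 3 : ℝ))
    (p : ℝ) (hp : p = (1 - ε) / ε)
    (q : (Fin d → ℝ) → (Fin d → ℝ) → ℝ)
    (hq : ∀ θ x, q θ x = (1 - ε) * gaussI θ x + ε * gaussI (-p • θ) x)
    (θ θ' : Fin d → ℝ) :
    |(∫ x : Fin d → ℝ, q θ x * q θ' x / gaussI 0 x) - 1|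
      ≤ Real.exp ((∑ i, θ i * θ' i) ^ 2 / ε ^ 4) - 1 := by
  change |_ - 1| ≤ exp ((θ ⬝ᵥ θ') ^ 2 / ε ^ 4) - 1
  simp only [hq, integral_mixture_mul_mixture_div_gaussI_zero, dotProduct_smul, smul_dotProduct,
    smul_eq_mul, ← mul_assoc, ← sq, neg_sq]
  exact abs_contaminated_sum_exp_sub_one_le hε.1 (by linarith [hε.2]) hp (θ ⬝ᵥ θ')

/-- bound on the χ²-correlation of two Huber-contaminated Gaussians with
respect to the standard Gaussian. -/
theorem stmt2 {d : ℕ} (hd : 1 ≤ d) (ε : ℝ) (hε : ε ∈ Set.Ioc 0 (1 / 3 : ℝ))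
    (p : ℝ) (hp : p = (1 - ε) / ε)
    (q : (Fin d → ℝ) → (Fin d → ℝ) → ℝ)
    (hq : ∀ θ x, q θ x = (1 - ε) * gaussI θ x + ε * gaussI (-p • θ) x)
    (θ θ' : Fin d → ℝ) :
    |(∫ x : Fin d → ℝ, q θ x * q θ' x / gaussI 0 x) - 1|
      ≤ Real.exp ((∑ i, θ i * θ' i) ^ 2 / ε ^ 4) - 1 :=
  stmt2_general ε hε p hp q hq θ θ'
end

section
/- Let ε ∈ (0, 1/3], set p := (1−ε)/ε (so p ≥ 2), and let t ≥ 0 be a real number. Then (4/p²)·( exp(p² t) − p² t − 1 ) ≤ exp(t²/ε⁴) − 1. -/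
/-! With `1/ε = p + 1` the right side is `exp y - 1` for `y = (p + 1)⁴ t²`, and `x = p² t`
satisfies `x² ≤ y`. From `eˣ - x - 1 ≤ x² eˣ / 2` the left side is at most `2 p² t² eˣ`;
`eˣ ≤ 2 e^{x²/2}` (AM-GM on the exponent, `e^{1/2} ≤ 2`) and `4 p² ≤ (p + 1)⁴` raise this to
`y e^{y/2}`, which is at most `e^y - 1` because `y/2 ≤ sinh (y/2)`. -/

open Real Set

lemma one_le_one_add_mul_exp_neg_add_sq_div_two {x : ℝ} (hx : 0 ≤ x) :
    1 ≤ (1 + x) * exp (-x) + x ^ 2 / 2 := by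
  let h : ℝ → ℝ := fun x ↦ (1 + x) * exp (-x) + x ^ 2 / 2
  have hderiv (x : ℝ) : HasDerivAt h (x * (1 - exp (-x))) x := by
    have := (((hasDerivAt_id x).const_add 1).mul (hasDerivAt_neg x).exp).add
      ((hasDerivAt_pow 2 x).div_const 2)
    exact this.congr_deriv (by simp only [id]; ring)
  have hmono : MonotoneOn h (Ici 0) := by
    refine monotoneOn_of_hasDerivWithinAt_nonneg (convex_Ici 0)
      (fun y _ ↦ (hderiv y).continuousAt.continuousWithinAt)
      (fun y _ ↦ (hderiv y).hasDerivWithinAt) fun y hy ↦ ?_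
    rw [interior_Ici, mem_Ioi] at hy
    exact mul_nonneg hy.le (sub_nonneg.2 (exp_le_one_iff.2 (by linarith)))
  simpa [h] using hmono self_mem_Ici hx hx

lemma exp_sub_sub_one_le {x : ℝ} (hx : 0 ≤ x) : exp x - x - 1 ≤ x ^ 2 / 2 * exp x := by
  have h := mul_le_mul_of_nonneg_right (one_le_one_add_mul_exp_neg_add_sq_div_two hx)
    (exp_pos x).le
  rw [add_mul, mul_assoc, ← exp_add, neg_add_cancel, exp_zero] at h
  linarith

lemma mul_exp_half_le_exp_sub_one {y : ℝ} (hy : 0 ≤ y) : y * exp (y / 2) ≤ exp y - 1 := by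
  have h := mul_le_mul_of_nonneg_right (self_le_sinh_iff.2 (by positivity : 0 ≤ y / 2))
    (exp_pos (y / 2)).le
  rw [sinh_eq, sub_div, sub_mul, div_mul_eq_mul_div, div_mul_eq_mul_div, ← exp_add,
    div_mul_eq_mul_div, ← exp_add, add_halves, neg_add_cancel, exp_zero] at h
  linarith

lemma exp_le_two_mul_exp_sq_div_two (x : ℝ) : exp x ≤ 2 * exp (x ^ 2 / 2) := by
  have hhalf : exp (1 / 2) ≤ 2 :=
    (exp_le_exp.2 (by linarith [log_two_gt_d9])).trans_eq (exp_log two_pos)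
  calc exp x ≤ exp (1 / 2 + x ^ 2 / 2) := exp_le_exp.2 (by nlinarith [sq_nonneg (x - 1)])
    _ = exp (1 / 2) * exp (x ^ 2 / 2) := exp_add _ _
    _ ≤ 2 * exp (x ^ 2 / 2) := by gcongr

theorem four_div_sq_mul_exp_sub_le {p t : ℝ} (hp : 0 ≤ p) (ht : 0 ≤ t) :
    4 / p ^ 2 * (exp (p ^ 2 * t) - p ^ 2 * t - 1) ≤ exp ((p + 1) ^ 4 * t ^ 2) - 1 := by
  rcases hp.eq_or_lt with rfl | hp
  · simpa using sq_nonneg t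
  set y := (p + 1) ^ 4 * t ^ 2
  have hsq : (p ^ 2 * t) ^ 2 ≤ y := by
    have : p ^ 4 ≤ (p + 1) ^ 4 := by gcongr; linarith
    simp only [y]; nlinarith [sq_nonneg t]
  calc 4 / p ^ 2 * (exp (p ^ 2 * t) - p ^ 2 * t - 1)
      ≤ 4 / p ^ 2 * ((p ^ 2 * t) ^ 2 / 2 * exp (p ^ 2 * t)) := by
        gcongr; exact exp_sub_sub_one_le (by positivity)
    _ = 2 * p ^ 2 * t ^ 2 * exp (p ^ 2 * t) := by field_simp; ring
    _ ≤ 2 * p ^ 2 * t ^ 2 * (2 * exp ((p ^ 2 * t) ^ 2 / 2)) := by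
        gcongr; exact exp_le_two_mul_exp_sq_div_two _
    _ ≤ y * exp (y / 2) := by
        rw [← mul_assoc]; gcongr
        simp only [y]; nlinarith [sq_nonneg t, sq_nonneg (p - 1)]
    _ ≤ exp y - 1 := mul_exp_half_le_exp_sub_one (by positivity)

/-- for `ε ∈ (0, 1/3]`, `p = (1−ε)/ε` and `t ≥ 0`,
`(4/p²)(exp(p²t) − p²t − 1) ≤ exp(t²/ε⁴) − 1`. -/
theorem stmt4 (ε : ℝ) (hε : ε ∈ Set.Ioc 0 (1 / 3 : ℝ)) (p : ℝ) (hp : p = (1 - ε) / ε)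
    (t : ℝ) (ht : 0 ≤ t) :
    (4 / p ^ 2) * (Real.exp (p ^ 2 * t) - p ^ 2 * t - 1) ≤ Real.exp (t ^ 2 / ε ^ 4) - 1 := by
  obtain ⟨hε0, hε3⟩ := hε
  have hp1 : p + 1 = 1 / ε := by rw [hp]; field_simp; ring
  have hp0 : 0 ≤ p := hp ▸ div_nonneg (by linarith) hε0.le
  convert four_div_sq_mul_exp_sub_le hp0 ht using 3
  rw [hp1]; field_simp
end

section
/- Let 0 < q ≤ 2, let d ≥ 1 and 0 ≤ m < d be integers, let μ ∈ ℝ^d, and let J ⊆ {1,…,d} with |J| = m be such that |μ_i| ≤ |μ_j| for every i ∉ J and j ∈ J. Then ∑_{i ∉ J} μ_i² ≤ ( ∑_{i=1}^d |μ_i|^q )^{2/q} · (m+1)^{1 − 2/q}. In particular, if ‖μ‖_q ≤ s then ∑_{i ∉ J} μ_i² ≤ s² (m+1)^{1 − 2/q}. -/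
/-!
Write `S = ∑ |μ i| ^ q`. Every coordinate outside `J` is dominated by the `m` coordinates in `J`,
so `(m + 1) |μ i| ^ q ≤ S`. Since `q ≤ 2`, this gives
`μ i ^ 2 = (|μ i| ^ q) ^ (2/q - 1) * |μ i| ^ q ≤ (S / (m + 1)) ^ (2/q - 1) * |μ i| ^ q`,
and summing over the complement of `J` yields `(S / (m + 1)) ^ (2/q - 1) * S = S ^ (2/q) (m + 1) ^ (1 - 2/q)`.
-/

open Finset

lemma Finset.card_add_one_mul_le_sum {ι : Type*} [Fintype ι] {f : ι → ℝ} (hf : ∀ j, 0 ≤ f j)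
    {J : Finset ι} {i : ι} (hi : i ∉ J) (hle : ∀ j ∈ J, f i ≤ f j) :
    ((J.card : ℝ) + 1) * f i ≤ ∑ j, f j :=
  calc ((J.card : ℝ) + 1) * f i = ∑ _ ∈ J, f i + f i := by
        rw [sum_const, nsmul_eq_mul]; ring
    _ ≤ ∑ j ∈ J, f j + f i := by gcongr with j hj; exact hle j hj
    _ = ∑ j ∈ J.cons i hi, f j := by rw [sum_cons, add_comm]
    _ ≤ ∑ j, f j := sum_le_univ_sum_of_nonneg hf

lemma Real.sq_le_rpow_mul_rpow_of_rpow_le {x A q : ℝ} (hx : 0 ≤ x) (hq0 : 0 < q) (hq2 : q ≤ 2)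
    (hA : x ^ q ≤ A) : x ^ 2 ≤ A ^ (2 / q - 1) * x ^ q := by
  have hxq : 0 ≤ x ^ q := rpow_nonneg hx q
  have hexp : 0 ≤ 2 / q - 1 := by rw [sub_nonneg, le_div_iff₀ hq0]; linarith
  calc x ^ 2 = (x ^ q) ^ (2 / q - 1 + 1) := by
        rw [sub_add_cancel, ← rpow_mul hx, mul_div_cancel₀ _ hq0.ne', rpow_two]
    _ = (x ^ q) ^ (2 / q - 1) * x ^ q := by
        rw [rpow_add' hxq (by simp [hq0.ne']), rpow_one]
    _ ≤ A ^ (2 / q - 1) * x ^ q := by gcongr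

lemma Real.div_rpow_sub_one_mul_self {S n p : ℝ} (hS : 0 ≤ S) (hn : 0 ≤ n) (hp : p ≠ 0) :
    (S / n) ^ (p - 1) * S = S ^ p * n ^ (1 - p) := by
  rw [div_rpow hS hn, div_mul_eq_mul_div, ← rpow_add_one' hS (by simpa using hp), sub_add_cancel,
    div_eq_mul_inv, ← rpow_neg hn, neg_sub]

theorem Finset.sum_compl_sq_le_of_abs_le {ι : Type*} [Fintype ι] [DecidableEq ι] {q : ℝ}
    (hq0 : 0 < q) (hq2 : q ≤ 2) (μ : ι → ℝ) (J : Finset ι)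
    (hmax : ∀ i ∉ J, ∀ j ∈ J, |μ i| ≤ |μ j|) :
    ∑ i ∈ Jᶜ, μ i ^ 2 ≤ (∑ i, |μ i| ^ q) ^ (2 / q) * ((J.card : ℝ) + 1) ^ (1 - 2 / q) := by
  set S := ∑ i, |μ i| ^ q
  have hpos : ∀ i, 0 ≤ |μ i| ^ q := fun i => Real.rpow_nonneg (abs_nonneg _) q
  have hm : (0 : ℝ) < J.card + 1 := by positivity
  have htail : ∀ i ∉ J, |μ i| ^ q ≤ S / (J.card + 1) := fun i hi => by
    rw [le_div_iff₀' hm]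
    exact card_add_one_mul_le_sum hpos hi fun j hj =>
      Real.rpow_le_rpow (abs_nonneg _) (hmax i hi j hj) hq0.le
  calc ∑ i ∈ Jᶜ, μ i ^ 2 = ∑ i ∈ Jᶜ, |μ i| ^ 2 := by simp_rw [sq_abs]
    _ ≤ ∑ i ∈ Jᶜ, (S / (J.card + 1)) ^ (2 / q - 1) * |μ i| ^ q :=
        sum_le_sum fun i hi => Real.sq_le_rpow_mul_rpow_of_rpow_le (abs_nonneg _) hq0 hq2
          (htail i (mem_compl.mp hi))
    _ ≤ (S / (J.card + 1)) ^ (2 / q - 1) * S := by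
        rw [← mul_sum]
        gcongr
        exact sum_le_univ_sum_of_nonneg hpos
    _ = S ^ (2 / q) * ((J.card : ℝ) + 1) ^ (1 - 2 / q) :=
        Real.div_rpow_sub_one_mul_self (sum_nonneg fun i _ => hpos i) hm.le (by positivity)

theorem stmt10_general (q : ℝ) (hq0 : 0 < q) (hq2 : q ≤ 2) (d m : ℕ)
    (μ : Fin d → ℝ) (J : Finset (Fin d)) (hJ : J.card = m)
    (hmax : ∀ i ∉ J, ∀ j ∈ J, |μ i| ≤ |μ j|) :
    (∑ i ∈ Jᶜ, μ i ^ 2) ≤ (∑ i, |μ i| ^ q) ^ (2 / q) * ((m : ℝ) + 1) ^ (1 - 2 / q) ∧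
      ∀ s : ℝ, (∑ i, |μ i| ^ q) ^ (1 / q) ≤ s →
        (∑ i ∈ Jᶜ, μ i ^ 2) ≤ s ^ 2 * ((m : ℝ) + 1) ^ (1 - 2 / q) := by
  have main := sum_compl_sq_le_of_abs_le hq0 hq2 μ J hmax
  rw [hJ] at main
  refine ⟨main, fun s hs => main.trans ?_⟩
  have hS : 0 ≤ ∑ i, |μ i| ^ q := sum_nonneg fun i _ => Real.rpow_nonneg (abs_nonneg _) q
  have hnorm_sq : (∑ i, |μ i| ^ q) ^ (2 / q) = ((∑ i, |μ i| ^ q) ^ (1 / q)) ^ 2 := by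
    rw [← Real.rpow_mul_natCast hS]; ring_nf
  rw [hnorm_sq]
  gcongr

/-- tail bound for vectors of bounded `ℓ_q` norm. If `J` consists of `m`
coordinates of `μ` of largest absolute value, then the squared Euclidean norm of the
remaining coordinates is at most `‖μ‖_q² (m+1)^{1−2/q}`; in particular it is at most
`s² (m+1)^{1−2/q}` when `‖μ‖_q ≤ s`. -/
theorem stmt10 (q : ℝ) (hq0 : 0 < q) (hq2 : q ≤ 2) (d m : ℕ) (hd : 1 ≤ d) (hmd : m < d)
    (μ : Fin d → ℝ) (J : Finset (Fin d)) (hJ : J.card = m)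
    (hmax : ∀ i ∉ J, ∀ j ∈ J, |μ i| ≤ |μ j|) :
    (∑ i ∈ Jᶜ, μ i ^ 2) ≤ (∑ i, |μ i| ^ q) ^ (2 / q) * ((m : ℝ) + 1) ^ (1 - 2 / q) ∧
      ∀ s : ℝ, (∑ i, |μ i| ^ q) ^ (1 / q) ≤ s →
        (∑ i ∈ Jᶜ, μ i ^ 2) ≤ s ^ 2 * ((m : ℝ) + 1) ^ (1 - 2 / q) :=
  stmt10_general q hq0 hq2 d m μ J hJ hmax
end

section
/- Let d, s, h be positive integers with 1 ≤ h ≤ s ≤ d. Then C(s,h) · C(d−s, s−h) / C(d,s) ≤ ( e s² / ( h (d−s+1) ) )^h, where C(a,b) denotes the binomial coefficient. (Equivalently, if H ~ Hypergeometric(d, s, s), then P[H = h] ≤ ( e s² / ( h (d−s+1) ) )^h.) -/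
/-!
Split the pmf as `C(s,h) · (C(d−s, s−h) / C(d,s))`. The first factor is at most `(e s / h)^h`
by `C(s,h) ≤ s^h / h!` and `h^h / h! ≤ e^h`. For the second, removing one element from both the
population and the sample turns `C(d,s)` into `(s/d) C(d,s)` and leaves `C(d−s, s−h)` unchanged
up to lowering `h`; as `d − s + 1 ≤ d`, induction on `h` gives `C(d−s, s−h) / C(d,s) ≤ (s / (d−s+1))^h`.
-/

open Nat Real

theorem Nat.choose_sub_mul_pow_le_choose_mul_pow {h s d : ℕ} (hhs : h ≤ s) (hsd : s ≤ d) :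
    (d - s).choose (s - h) * (d - s + 1) ^ h ≤ d.choose s * s ^ h := by
  induction h generalizing s d with
  | zero => simpa using choose_le_choose s (sub_le d s)
  | succ h ih =>
    obtain ⟨s, rfl⟩ : ∃ s', s = s' + 1 := exists_eq_add_one.mpr (by omega)
    obtain ⟨d, rfl⟩ : ∃ d', d = d' + 1 := exists_eq_add_one.mpr (by omega)
    rw [Nat.add_sub_add_right, Nat.add_sub_add_right]
    have ih := ih (by omega) (by omega : s ≤ d)
    calc (d - s).choose (s - h) * (d - s + 1) ^ (h + 1)
        = (d - s + 1) * ((d - s).choose (s - h) * (d - s + 1) ^ h) := by ring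
      _ ≤ (d + 1) * (d.choose s * (s + 1) ^ h) :=
        Nat.mul_le_mul (by omega) (ih.trans (by gcongr; omega))
      _ = (d + 1).choose (s + 1) * (s + 1) ^ (h + 1) := by
        rw [← mul_assoc, add_one_mul_choose_eq]; ring

theorem Nat.choose_sub_div_choose_le {h s d : ℕ} (hhs : h ≤ s) (hsd : s ≤ d) :
    ((d - s).choose (s - h) : ℝ) / d.choose s ≤ (s / ((d : ℝ) - s + 1)) ^ h := by
  have hcast : (d : ℝ) - s + 1 = ((d - s + 1 : ℕ) : ℝ) := by push_cast [Nat.cast_sub hsd]; ring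
  have hchoose : (0 : ℝ) < d.choose s := mod_cast choose_pos hsd
  rw [hcast, div_le_iff₀ hchoose, div_pow, div_mul_eq_mul_div, le_div_iff₀ (by positivity)]
  exact_mod_cast (choose_sub_mul_pow_le_choose_mul_pow hhs hsd).trans_eq (mul_comm _ _)

theorem Nat.div_exp_one_pow_le_factorial (k : ℕ) : (k / exp 1) ^ k ≤ (k ! : ℝ) := by
  rw [div_pow, ← exp_nat_mul, mul_one, div_le_iff₀ (exp_pos _), mul_comm,
    ← div_le_iff₀ (mod_cast factorial_pos k)]
  exact Real.pow_div_factorial_le_exp _ (cast_nonneg k) k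

theorem Nat.choose_le_exp_one_mul_div_pow (n k : ℕ) :
    (n.choose k : ℝ) ≤ (exp 1 * n / k) ^ k := by
  rcases eq_or_ne k 0 with rfl | hk
  · simp
  calc (n.choose k : ℝ) ≤ n ^ k / k ! := choose_le_pow_div k n
    _ ≤ n ^ k / (k / exp 1) ^ k := by
      have : (0 : ℝ) < k := mod_cast pos_of_ne_zero hk
      exact div_le_div_of_nonneg_left (by positivity) (by positivity)
        (div_exp_one_pow_le_factorial k)
    _ = (exp 1 * n / k) ^ k := by rw [← div_pow]; field_simp

theorem stmt13_general (d s h : ℕ) (hhs : h ≤ s) (hsd : s ≤ d) :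
    ((s.choose h : ℝ) * ((d - s).choose (s - h) : ℝ)) / (d.choose s : ℝ)
      ≤ (Real.exp 1 * (s : ℝ) ^ 2 / ((h : ℝ) * ((d : ℝ) - (s : ℝ) + 1))) ^ h := by
  calc ((s.choose h : ℝ) * ((d - s).choose (s - h) : ℝ)) / (d.choose s : ℝ)
      = (s.choose h : ℝ) * (((d - s).choose (s - h) : ℝ) / d.choose s) := mul_div_assoc _ _ _
    _ ≤ (exp 1 * s / h) ^ h * (s / ((d : ℝ) - s + 1)) ^ h :=
      mul_le_mul (choose_le_exp_one_mul_div_pow s h) (choose_sub_div_choose_le hhs hsd)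
        (by positivity) (by positivity)
    _ = (exp 1 * (s : ℝ) ^ 2 / ((h : ℝ) * ((d : ℝ) - (s : ℝ) + 1))) ^ h := by
      rw [← mul_pow, _root_.div_mul_div_comm, mul_assoc, ← sq]

/-- pointwise bound on the hypergeometric pmf:
`C(s,h) C(d−s, s−h) / C(d,s) ≤ (e s² / (h(d−s+1)))^h`. -/
theorem stmt13 (d s h : ℕ) (h1 : 1 ≤ h) (hhs : h ≤ s) (hsd : s ≤ d) :
    ((s.choose h : ℝ) * ((d - s).choose (s - h) : ℝ)) / (d.choose s : ℝ)
      ≤ (Real.exp 1 * (s : ℝ) ^ 2 / ((h : ℝ) * ((d : ℝ) - (s : ℝ) + 1))) ^ h :=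
  stmt13_general d s h hhs hsd
end

section
/- Let d, s be positive integers with s ≤ d, let λ ∈ ℝ and τ ∈ (0, 1] with sτ > 0, and set T := log( τ (d−s+1) / (e s) ) − λ. Assume T > 0. Then ∑_{h=⌈sτ⌉}^{s} exp(λ h) · C(s,h) C(d−s, s−h) / C(d,s) ≤ exp(−sτ · T) / (1 − exp(−T)). (Equivalently, if H ~ Hypergeometric(d, s, s), then E[ exp(λH) · 1{H > sτ−1} restricted to H ≥ ⌈sτ⌉ ] ≤ e^{−sτT}/(1−e^{−T}).) -/
/-!
Put `q = e^{-T} = e^λ · e s / (τ (d - s + 1))`; each summand is at most `q^h`. Indeed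
`C(s,h) ≤ (e s / h)^h ≤ (e / τ)^h` since `h ≥ sτ`, and `C(d-s, s-h) / C(d,s) ≤ (s / (d-s+1))^h`,
because `C(d,k) / C(d,k+1) = (k+1) / (d-k) ≤ s / (d-s+1)` for `k < s`. The geometric tail from
`⌈sτ⌉` then sums to at most `q^⌈sτ⌉ / (1 - q) ≤ e^{-sτT} / (1 - q)`.
-/

open Finset Real

namespace Nat

theorem choose_mul_sub_add_one_le_choose_succ_mul {d s k : ℕ} (hks : k < s) (hsd : s ≤ d) :
    d.choose k * (d - s + 1) ≤ d.choose (k + 1) * s :=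
  calc d.choose k * (d - s + 1)
      ≤ d.choose k * (d - k) := Nat.mul_le_mul_left _ (by omega)
    _ = d.choose (k + 1) * (k + 1) := (choose_succ_right_eq d k).symm
    _ ≤ d.choose (k + 1) * s := Nat.mul_le_mul_left _ hks

theorem choose_sub_mul_pow_le {d s h : ℕ} (hsd : s ≤ d) (hhs : h ≤ s) :
    d.choose (s - h) * (d - s + 1) ^ h ≤ d.choose s * s ^ h := by
  induction h with
  | zero => simp
  | succ h ih =>
    have hstep := choose_mul_sub_add_one_le_choose_succ_mul (d := d) (k := s - (h + 1))
      (by omega) hsd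
    rw [show s - (h + 1) + 1 = s - h by omega] at hstep
    calc d.choose (s - (h + 1)) * (d - s + 1) ^ (h + 1)
        = d.choose (s - (h + 1)) * (d - s + 1) * (d - s + 1) ^ h := by ring
      _ ≤ d.choose (s - h) * s * (d - s + 1) ^ h := Nat.mul_le_mul_right _ hstep
      _ = s * (d.choose (s - h) * (d - s + 1) ^ h) := by ring
      _ ≤ s * (d.choose s * s ^ h) := Nat.mul_le_mul_left _ (ih (by omega))
      _ = d.choose s * s ^ (h + 1) := by ring

theorem choose_le_exp_one_mul_div_pow_s14 (n k : ℕ) :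
    (n.choose k : ℝ) ≤ (exp 1 * n / k) ^ k := by
  have hk : (0 : ℝ) < (k : ℝ) ^ k := by
    rcases k.eq_zero_or_pos with rfl | hk0
    · simp
    · positivity
  have hfact : (k : ℝ) ^ k / k ! ≤ exp k := Real.pow_div_factorial_le_exp _ k.cast_nonneg k
  calc (n.choose k : ℝ) ≤ (n : ℝ) ^ k / k ! := choose_le_pow_div k n
    _ = (n : ℝ) ^ k / (k : ℝ) ^ k * ((k : ℝ) ^ k / k !) := by field_simp
    _ ≤ (n : ℝ) ^ k / (k : ℝ) ^ k * exp k := by gcongr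
    _ = (exp 1 * n / k) ^ k := by rw [← exp_one_pow, div_pow, mul_pow]; ring

theorem choose_sub_div_choose_le_s14 {d s h : ℕ} (hsd : s ≤ d) (hhs : h ≤ s) :
    ((d - s).choose (s - h) : ℝ) / d.choose s ≤ ((s : ℝ) / ((d : ℝ) - s + 1)) ^ h := by
  have hpos : (0 : ℝ) < (d : ℝ) - s + 1 := by
    have : (s : ℝ) ≤ d := by exact_mod_cast hsd
    linarith
  have hnat : (d - s).choose (s - h) * (d - s + 1) ^ h ≤ d.choose s * s ^ h :=
    (Nat.mul_le_mul_right _ (choose_le_choose _ (Nat.sub_le d s))).trans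
      (choose_sub_mul_pow_le hsd hhs)
  have hreal :
      ((d - s).choose (s - h) : ℝ) * ((d : ℝ) - s + 1) ^ h ≤ d.choose s * (s : ℝ) ^ h := by
    rw [← Nat.cast_sub hsd]
    exact_mod_cast hnat
  rw [div_pow, div_le_div_iff₀ (mod_cast Nat.choose_pos hsd) (pow_pos hpos h)]
  linarith

theorem choose_mul_choose_sub_div_choose_le {d s h : ℕ} {τ : ℝ} (hsd : s ≤ d) (hhs : h ≤ s)
    (hτ : 0 < τ) (hsτ : (s : ℝ) * τ ≤ h) :
    (s.choose h : ℝ) * (d - s).choose (s - h) / d.choose s ≤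
      (exp 1 * s / (τ * ((d : ℝ) - s + 1))) ^ h := by
  have hsh : exp 1 * s / h ≤ exp 1 / τ :=
    div_le_of_le_mul₀ h.cast_nonneg (by positivity) (by
      rw [div_mul_eq_mul_div, le_div_iff₀ hτ, mul_assoc]
      gcongr)
  calc (s.choose h : ℝ) * (d - s).choose (s - h) / d.choose s
      = (s.choose h : ℝ) * (((d - s).choose (s - h) : ℝ) / d.choose s) := mul_div_assoc _ _ _
    _ ≤ (exp 1 / τ) ^ h * ((s : ℝ) / ((d : ℝ) - s + 1)) ^ h := by
      gcongr
      · exact (choose_le_exp_one_mul_div_pow_s14 s h).trans (by gcongr)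
      · exact choose_sub_div_choose_le_s14 hsd hhs
    _ = (exp 1 * s / (τ * ((d : ℝ) - s + 1))) ^ h := by rw [← mul_pow, _root_.div_mul_div_comm]

end Nat

/-- truncated MGF bound for the hypergeometric distribution:
`∑_{h=⌈sτ⌉}^s e^{λh} C(s,h)C(d−s,s−h)/C(d,s) ≤ e^{−sτT}/(1−e^{−T})` where
`T = log(τ(d−s+1)/(es)) − λ > 0`. -/
theorem stmt14 (d s : ℕ) (hs : 1 ≤ s) (hsd : s ≤ d) (lam τ : ℝ)
    (hτ : τ ∈ Set.Ioc (0 : ℝ) 1)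
    (T : ℝ)
    (hT : T = Real.log (τ * ((d : ℝ) - (s : ℝ) + 1) / (Real.exp 1 * (s : ℝ))) - lam)
    (hTpos : 0 < T) :
    ∑ h ∈ Finset.Icc ⌈(s : ℝ) * τ⌉₊ s,
        Real.exp (lam * (h : ℝ)) *
          (((s.choose h : ℝ) * ((d - s).choose (s - h) : ℝ)) / (d.choose s : ℝ))
      ≤ Real.exp (-((s : ℝ) * τ) * T) / (1 - Real.exp (-T)) := by
  have hτ0 : 0 < τ := hτ.1
  set q := exp (-T) with hq_def
  have hq1 : q < 1 := exp_lt_one_iff.mpr (by linarith)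
  have hq : q = exp lam * (exp 1 * s / (τ * ((d : ℝ) - s + 1))) := by
    have hs0 : (0 : ℝ) < s := by exact_mod_cast hs
    have hds : (0 : ℝ) < (d : ℝ) - s + 1 := by
      have : (s : ℝ) ≤ d := by exact_mod_cast hsd
      linarith
    rw [hq_def, hT, neg_sub, exp_sub, exp_log (by positivity)]
    field_simp
  have hterm : ∀ h ∈ Icc ⌈(s : ℝ) * τ⌉₊ s,
      exp (lam * h) * ((s.choose h : ℝ) * (d - s).choose (s - h) / d.choose s) ≤ q ^ h := by
    intro h hh
    obtain ⟨hmh, hhs⟩ := mem_Icc.mp hh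
    rw [hq, mul_pow, ← exp_nat_mul, mul_comm (h : ℝ)]
    gcongr
    exact Nat.choose_mul_choose_sub_div_choose_le hsd hhs hτ0 (Nat.ceil_le.mp hmh)
  have hceil : q ^ ⌈(s : ℝ) * τ⌉₊ ≤ exp (-((s : ℝ) * τ) * T) := by
    rw [← exp_nat_mul, exp_le_exp]
    nlinarith [Nat.le_ceil ((s : ℝ) * τ)]
  calc _ ≤ ∑ h ∈ Icc ⌈(s : ℝ) * τ⌉₊ s, q ^ h := sum_le_sum hterm
    _ ≤ q ^ ⌈(s : ℝ) * τ⌉₊ / (1 - q) := by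
      rw [← Ico_add_one_right_eq_Icc]
      exact geom_sum_Ico_le_of_lt_one (exp_nonneg _) hq1
    _ ≤ exp (-((s : ℝ) * τ) * T) / (1 - q) := by gcongr
end

section
/- Let (Θ being a nonempty finite set), k ≥ 1, n ≥ 1, and let p : ℝ^k → [0,∞) and q_θ : ℝ^k → [0,∞) for each θ ∈ Θ be measurable functions with p > 0 almost everywhere. Define Q(x₁,…,x_n) := (1/|Θ|) ∑_{θ∈Θ} ∏_{i=1}^n q_θ(x_i) on (ℝ^k)^n. Then (with both sides possibly equal to +∞): ∫_{(ℝ^k)^n} Q(x₁,…,x_n)² / ∏_{i=1}^n p(x_i) dx₁⋯dx_n = (1/|Θ|²) ∑_{θ,θ'∈Θ} ( ∫_{ℝ^k} q_θ(x) q_{θ'}(x) / p(x) dx )^n. -/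
open MeasureTheory ENNReal

/-!
Expanding the square of `Q` turns `Q² / ∏ p` into `|Θ|⁻² ∑_{θ,θ'} ∏ᵢ r_{θθ'}(xᵢ)` with
`r_{θθ'} = q_θ q_{θ'} / p` (this uses `p < ∞`, so that `(∏ p)⁻¹ = ∏ p⁻¹` in `ℝ≥0∞`).
The integral of a tensor product `∏ᵢ r(xᵢ)` over the product measure is `(∫ r)ⁿ` by Tonelli.
-/

namespace MeasureTheory

theorem lintegral_fin_nat_prod_eq_prod {n : ℕ} {E : Type*}
    {mE : MeasurableSpace E} {μ : Fin n → Measure E} [∀ i, SigmaFinite (μ i)]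
    {f : Fin n → E → ℝ≥0∞} (hf : ∀ i, Measurable (f i)) :
    ∫⁻ x : Fin n → E, ∏ i, f i (x i) ∂(Measure.pi μ) = ∏ i, ∫⁻ x, f i x ∂(μ i) := by
  induction n with
  | zero => simp
  | succ n ih =>
      calc
        _ = ∫⁻ x : E × (Fin n → E), f 0 x.1 * ∏ i : Fin n, f i.succ (x.2 i)
            ∂(μ 0).prod (Measure.pi fun i ↦ μ i.succ) := by
          rw [← ((measurePreserving_piFinSuccAbove μ 0).symm).lintegral_comp_emb
            (MeasurableEquiv.measurableEmbedding _)]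
          simp [MeasurableEquiv.piFinSuccAbove_symm_apply, Fin.insertNthEquiv,
            Fin.prod_univ_succ]
        _ = (∫⁻ x, f 0 x ∂μ 0) * ∏ i : Fin n, ∫⁻ x, f i.succ x ∂(μ i.succ) := by
          have hprod : Measurable fun x : Fin n → E ↦ ∏ i, f i.succ (x i) :=
            Finset.measurable_prod _ fun i _ ↦ (hf i.succ).comp (measurable_pi_apply i)
          rw [← ih fun i ↦ hf i.succ, ← lintegral_prod_mul (hf 0).aemeasurable hprod.aemeasurable]
        _ = ∏ i, ∫⁻ x, f i x ∂(μ i) := by rw [Fin.prod_univ_succ]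

theorem lintegral_fin_nat_prod_eq_pow {n : ℕ} {E : Type*} {mE : MeasurableSpace E}
    {μ : Measure E} [SigmaFinite μ] {f : E → ℝ≥0∞} (hf : Measurable f) :
    ∫⁻ x : Fin n → E, ∏ i, f (x i) ∂(Measure.pi fun _ ↦ μ) = (∫⁻ x, f x ∂μ) ^ n := by
  rw [lintegral_fin_nat_prod_eq_prod fun _ ↦ hf, Finset.prod_const, Finset.card_fin]

end MeasureTheory

namespace ENNReal

theorem mul_sum_prod_sq_div_prod {Θ ι : Type*} [Fintype Θ] [Fintype ι] (c : ℝ≥0∞)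
    (a : Θ → ι → ℝ≥0∞) {b : ι → ℝ≥0∞} (hb : ∀ i, b i ≠ ⊤) :
    (c * ∑ θ, ∏ i, a θ i) ^ 2 / ∏ i, b i = c ^ 2 * ∑ θ, ∑ θ', ∏ i, a θ i * a θ' i / b i := by
  rw [mul_pow, mul_div_assoc]
  simp_rw [sq (∑ θ, _), Finset.sum_mul_sum, div_eq_mul_inv, Finset.sum_mul,
    ← Finset.prod_mul_distrib, ENNReal.prod_inv_distrib fun i _ j _ _ ↦ Or.inr (hb j),
    ← Finset.prod_mul_distrib]

end ENNReal

theorem stmt15_general (Θ : Type*) [Fintype Θ] (k n : ℕ)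
    (p : (Fin k → ℝ) → ℝ≥0∞) (q : Θ → (Fin k → ℝ) → ℝ≥0∞)
    (hp : Measurable p) (hq : ∀ θ, Measurable (q θ))
    (hp_fin : ∀ x, p x ≠ ⊤) :
    ∫⁻ x : Fin n → Fin k → ℝ,
        ((1 / (Fintype.card Θ : ℝ≥0∞)) * ∑ θ, ∏ i, q θ (x i)) ^ 2 / ∏ i, p (x i)
      = (1 / (Fintype.card Θ : ℝ≥0∞) ^ 2) *
          ∑ θ, ∑ θ', (∫⁻ x : Fin k → ℝ, q θ x * q θ' x / p x) ^ n := by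
  have hr : ∀ θ θ', Measurable fun y ↦ q θ y * q θ' y / p y :=
    fun θ θ' ↦ ((hq θ).mul (hq θ')).div hp
  have hprod : ∀ θ θ', Measurable fun x : Fin n → Fin k → ℝ ↦
      ∏ i, q θ (x i) * q θ' (x i) / p (x i) :=
    fun θ θ' ↦ Finset.measurable_prod _ fun i _ ↦ (hr θ θ').comp (measurable_pi_apply i)
  simp_rw [ENNReal.mul_sum_prod_sq_div_prod _ _ fun i ↦ hp_fin _]
  rw [lintegral_const_mul _ (Finset.measurable_sum _ fun θ _ ↦
      Finset.measurable_sum _ fun θ' _ ↦ hprod θ θ'),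
    lintegral_finsetSum _ fun θ _ ↦ Finset.measurable_sum _ fun θ' _ ↦ hprod θ θ',
    one_div, one_div, ENNReal.inv_pow]
  congr 1
  refine Finset.sum_congr rfl fun θ _ ↦ ?_
  rw [lintegral_finsetSum _ fun θ' _ ↦ hprod θ θ']
  exact Finset.sum_congr rfl fun θ' _ ↦ lintegral_fin_nat_prod_eq_pow (hr θ θ')

/-- the Ingster–Suslina tensorization identity, as an identity in `[0,∞]`:
for `Q = (1/|Θ|) ∑_θ ∏_i q_θ(x_i)`,
`∫ Q²/∏ p = (1/|Θ|²) ∑_{θ,θ'} (∫ q_θ q_{θ'}/p)^n`. -/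
theorem stmt15 (Θ : Type*) [Fintype Θ] [Nonempty Θ] (k n : ℕ) (hk : 1 ≤ k) (hn : 1 ≤ n)
    (p : (Fin k → ℝ) → ℝ≥0∞) (q : Θ → (Fin k → ℝ) → ℝ≥0∞)
    (hp : Measurable p) (hq : ∀ θ, Measurable (q θ))
    (hp_fin : ∀ x, p x ≠ ⊤) (hq_fin : ∀ θ x, q θ x ≠ ⊤)
    (hp_pos : ∀ᵐ x ∂(volume : Measure (Fin k → ℝ)), p x ≠ 0) :
    ∫⁻ x : Fin n → Fin k → ℝ,
        ((1 / (Fintype.card Θ : ℝ≥0∞)) * ∑ θ, ∏ i, q θ (x i)) ^ 2 / ∏ i, p (x i)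
      = (1 / (Fintype.card Θ : ℝ≥0∞) ^ 2) *
          ∑ θ, ∑ θ', (∫⁻ x : Fin k → ℝ, q θ x * q θ' x / p x) ^ n :=
  stmt15_general Θ k n p q hp hq hp_fin
end
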